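/- arXiv:2403.19867 — 4 statements merged into one kernel-verified Lean document; each statement's English description precedes it below -/
import Mathlib

section
/- Fix integers m, N ≥ 1, observations x_1,…,x_m ∈ {1,…,N}, a real M ≥ 0, and labels y_1,…,y_m with 0 ≤ y_i ≤ M for all i. Let 0 ≤ j < j' ≤ N, suppose at least one i satisfies x_i ≤ j, and let b = #{i : j < x_i ≤ j'}. Then L(j') ≤ L(j) + 5bM²/(4m), where L is the mean squared error of a split. -/
open Finset

/-!
Moving the split from `j` to `j'` transfers the block `B = {i | j < x i ≤ j'}` from the right
cell to the left one. Re-optimising the two means can only lower the error, so the new error is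
at most the cost of keeping the old left mean on `A ∪ B` and the old right mean on the rest.
Against the old left mean, which lies in `[0, M]` because the left cell is nonempty, each point
of `B` costs at most `M²`, whereas it used to cost something nonnegative on the right. Hence
`L j' ≤ L j + b M² / m`.
-/

/-- Stated for any `c` that equals the mean when `s` is nonempty, since the mean of an empty set
is unconstrained. -/
lemma sum_sq_sub_le_of_eq_mean {ι : Type*} {s : Finset ι} {y : ι → ℝ} {c : ℝ}
    (hc : s.Nonempty → c = (∑ i ∈ s, y i) / #s) (d : ℝ) :
    ∑ i ∈ s, (y i - c) ^ 2 ≤ ∑ i ∈ s, (y i - d) ^ 2 := by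
  rcases s.eq_empty_or_nonempty with rfl | hs
  · simp
  have hdev : ∑ i ∈ s, (y i - c) = 0 := by
    rw [sum_sub_distrib, sum_const, nsmul_eq_mul, hc hs]
    field_simp
    ring
  have hexpand : ∑ i ∈ s, (y i - d) ^ 2
      = ∑ i ∈ s, (y i - c) ^ 2 + 2 * (c - d) * ∑ i ∈ s, (y i - c) + #s * (c - d) ^ 2 := by
    rw [mul_sum, ← sum_add_distrib]
    simp only [← nsmul_eq_mul, ← sum_const, ← sum_add_distrib]
    exact sum_congr rfl fun _ _ => by ring
  rw [hexpand, hdev]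
  nlinarith [sq_nonneg (c - d)]

lemma sum_div_card_mem_Icc {ι : Type*} {s : Finset ι} {y : ι → ℝ} {a b : ℝ} (hs : s.Nonempty)
    (hy : ∀ i ∈ s, y i ∈ Set.Icc a b) : (∑ i ∈ s, y i) / #s ∈ Set.Icc a b := by
  rw [← expect_eq_sum_div_card]
  exact ⟨le_expect hs fun i hi => (hy i hi).1, expect_le hs fun i hi => (hy i hi).2⟩

lemma sq_sub_le_sq_of_mem_Icc {a b M : ℝ} (ha : a ∈ Set.Icc 0 M) (hb : b ∈ Set.Icc 0 M) :
    (a - b) ^ 2 ≤ M ^ 2 :=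
  sq_le_sq' (by linarith [ha.1, hb.2]) (by linarith [ha.2, hb.1])

section Split

variable {ι : Type*} [Fintype ι] (x : ι → ℕ) {j j' : ℕ}

lemma sum_filter_le_eq_add (h : j ≤ j') (f : ι → ℝ) :
    ∑ i with x i ≤ j', f i = ∑ i with x i ≤ j, f i + ∑ i with j < x i ∧ x i ≤ j', f i := by
  classical
  rw [← sum_union]
  · congr 1; ext i; simp only [mem_filter, mem_univ, true_and, mem_union]; omega
  · exact disjoint_filter.2 fun i _ _ => by omega

lemma sum_filter_lt_eq_add (h : j ≤ j') (f : ι → ℝ) :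
    ∑ i with j < x i, f i = ∑ i with j < x i ∧ x i ≤ j', f i + ∑ i with j' < x i, f i := by
  classical
  rw [← sum_union]
  · congr 1; ext i; simp only [mem_filter, mem_univ, true_and, mem_union]; omega
  · exact disjoint_filter.2 fun i _ _ => by omega

end Split

theorem regression_split_shift_general
    (m : ℕ)
    (x : Fin m → ℕ)
    (M : ℝ)
    (y : Fin m → ℝ) (hy : ∀ i, 0 ≤ y i ∧ y i ≤ M)
    (j j' : ℕ) (hjj' : j < j')
    (μ γ L : ℕ → ℝ)
    (hμ : ∀ k : ℕ, ({i : Fin m | x i ≤ k} : Finset (Fin m)).Nonempty →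
      μ k = (∑ i ∈ ({i : Fin m | x i ≤ k} : Finset (Fin m)), y i) /
            (({i : Fin m | x i ≤ k} : Finset (Fin m)).card : ℝ))
    (hγ : ∀ k : ℕ, ({i : Fin m | k < x i} : Finset (Fin m)).Nonempty →
      γ k = (∑ i ∈ ({i : Fin m | k < x i} : Finset (Fin m)), y i) /
            (({i : Fin m | k < x i} : Finset (Fin m)).card : ℝ))
    (hL : ∀ k : ℕ, L k = (1 / (m : ℝ)) *
      ((∑ i ∈ ({i : Fin m | x i ≤ k} : Finset (Fin m)), (y i - μ k) ^ 2) +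
       (∑ i ∈ ({i : Fin m | k < x i} : Finset (Fin m)), (y i - γ k) ^ 2)))
    (hleft : ({i : Fin m | x i ≤ j} : Finset (Fin m)).Nonempty)
    (b : ℕ) (hb : b = ({i : Fin m | j < x i ∧ x i ≤ j'} : Finset (Fin m)).card) :
    L j' ≤ L j + 5 * (b : ℝ) * M ^ 2 / (4 * (m : ℝ)) := by
  have hy' : ∀ i, y i ∈ Set.Icc 0 M := fun i => hy i
  have hμj : μ j ∈ Set.Icc 0 M := hμ j hleft ▸ sum_div_card_mem_Icc hleft fun i _ => hy' i
  have hleft_le : ∑ i with x i ≤ j', (y i - μ j') ^ 2 ≤ ∑ i with x i ≤ j', (y i - μ j) ^ 2 :=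
    sum_sq_sub_le_of_eq_mean (hμ j') _
  have hright_le : ∑ i with j' < x i, (y i - γ j') ^ 2 ≤ ∑ i with j' < x i, (y i - γ j) ^ 2 :=
    sum_sq_sub_le_of_eq_mean (hγ j') _
  have hblock : ∑ i with j < x i ∧ x i ≤ j', (y i - μ j) ^ 2 ≤ b * M ^ 2 := by
    simpa [hb] using sum_le_card_nsmul _ _ _ fun i _ => sq_sub_le_sq_of_mem_Icc (hy' i) hμj
  have hblock_right : 0 ≤ ∑ i with j < x i ∧ x i ≤ j', (y i - γ j) ^ 2 :=
    sum_nonneg fun _ _ => sq_nonneg _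
  rw [sum_filter_le_eq_add x hjj'.le fun i => (y i - μ j) ^ 2] at hleft_le
  rw [hL, hL, sum_filter_lt_eq_add x hjj'.le,
    show 5 * (b : ℝ) * M ^ 2 / (4 * m) = 1 / m * (5 * b * M ^ 2 / 4) by ring, ← mul_add]
  refine mul_le_mul_of_nonneg_left ?_ (by positivity)
  nlinarith [sq_nonneg M, b.cast_nonneg (α := ℝ)]

/-- Shifting the regression split from `j` to `j' > j` increases the mean squared
error by at most `5bM²/(4m)`, where `b` is the number of observations strictly
between the two splits (Lemma 2 of the paper). -/
theorem regression_split_shift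
    (m N : ℕ) (hm : 1 ≤ m) (hN : 1 ≤ N)
    (x : Fin m → ℕ) (hx : ∀ i, 1 ≤ x i ∧ x i ≤ N)
    (M : ℝ) (hM : 0 ≤ M)
    (y : Fin m → ℝ) (hy : ∀ i, 0 ≤ y i ∧ y i ≤ M)
    (j j' : ℕ) (hjj' : j < j') (hj'N : j' ≤ N)
    (μ γ L : ℕ → ℝ)
    (hμ : ∀ k : ℕ, ({i : Fin m | x i ≤ k} : Finset (Fin m)).Nonempty →
      μ k = (∑ i ∈ ({i : Fin m | x i ≤ k} : Finset (Fin m)), y i) /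
            (({i : Fin m | x i ≤ k} : Finset (Fin m)).card : ℝ))
    (hγ : ∀ k : ℕ, ({i : Fin m | k < x i} : Finset (Fin m)).Nonempty →
      γ k = (∑ i ∈ ({i : Fin m | k < x i} : Finset (Fin m)), y i) /
            (({i : Fin m | k < x i} : Finset (Fin m)).card : ℝ))
    (hL : ∀ k : ℕ, L k = (1 / (m : ℝ)) *
      ((∑ i ∈ ({i : Fin m | x i ≤ k} : Finset (Fin m)), (y i - μ k) ^ 2) +
       (∑ i ∈ ({i : Fin m | k < x i} : Finset (Fin m)), (y i - γ k) ^ 2)))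
    (hleft : ({i : Fin m | x i ≤ j} : Finset (Fin m)).Nonempty)
    (b : ℕ) (hb : b = ({i : Fin m | j < x i ∧ x i ≤ j'} : Finset (Fin m)).card) :
    L j' ≤ L j + 5 * (b : ℝ) * M ^ 2 / (4 * (m : ℝ)) :=
  regression_split_shift_general m x M y hy j j' hjj' μ γ L hμ hγ hL hleft b hb
end

section
/- Fix integers m, N ≥ 1, observations x_1,…,x_m ∈ {1,…,N}, a real M ≥ 0, labels y_1,…,y_m ∈ [0,M], and a real b ≥ 0. Let 0 = j_0 < j_1 < … < j_k = N be candidate split points such that for every t ∈ {0,…,k−1}, #{i : j_t < x_i ≤ j_{t+1}} ≤ b. Then min_{0 ≤ t ≤ k} L(j_t) ≤ min_{1 ≤ j ≤ N} L(j) + 5bM²/(4m), where L is the mean squared error of a split. -/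
/-!
Moving a split point left from `j` to a candidate `j' ≤ j` can only lower the squared
deviation of the left part (a subset, and the mean minimises squared deviation), while the
right part gains the at most `b` observations with `j' < x ≤ j`. Measuring the enlarged right
part against the old right mean, which lies in `[0, M]`, each of these costs at most `M²`.
Hence the candidate just below any `j` is within `bM²/m` of `L j`.
-/

open Finset
open scoped BigOperators

section SumSqDev

variable {ι : Type*}

noncomputable def sumSqDev (s : Finset ι) (y : ι → ℝ) : ℝ :=
  ∑ i ∈ s, (y i - 𝔼 j ∈ s, y j) ^ 2

theorem sum_sq_sub_eq_sumSqDev_add (s : Finset ι) (y : ι → ℝ) (c : ℝ) :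
    ∑ i ∈ s, (y i - c) ^ 2 = sumSqDev s y + #s * (𝔼 j ∈ s, y j - c) ^ 2 := by
  set μ := (𝔼 j ∈ s, y j)
  have hdev : ∑ i ∈ s, (y i - μ) = 0 := by
    rw [sum_sub_distrib, sum_const, nsmul_eq_mul, card_mul_expect, sub_self]
  calc ∑ i ∈ s, (y i - c) ^ 2
      = ∑ i ∈ s, ((y i - μ) ^ 2 + 2 * (μ - c) * (y i - μ) + (μ - c) ^ 2) :=
        sum_congr rfl fun i _ => by ring
    _ = sumSqDev s y + #s * (μ - c) ^ 2 := by
        rw [sum_add_distrib, sum_add_distrib, ← mul_sum, hdev, sum_const, nsmul_eq_mul,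
          mul_zero, add_zero]
        rfl

theorem sumSqDev_le_sum_sq_sub (s : Finset ι) (y : ι → ℝ) (c : ℝ) :
    sumSqDev s y ≤ ∑ i ∈ s, (y i - c) ^ 2 := by
  rw [sum_sq_sub_eq_sumSqDev_add]
  exact le_add_of_nonneg_right (by positivity)

theorem sum_sq_sub_eq_sumSqDev {s : Finset ι} {y : ι → ℝ} {c : ℝ}
    (hc : s.Nonempty → c = (∑ i ∈ s, y i) / #s) :
    ∑ i ∈ s, (y i - c) ^ 2 = sumSqDev s y := by
  rcases s.eq_empty_or_nonempty with rfl | hs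
  · simp [sumSqDev]
  · rw [sumSqDev, hc hs, expect_eq_sum_div_card]

theorem sumSqDev_mono {s t : Finset ι} (hst : s ⊆ t) (y : ι → ℝ) :
    sumSqDev s y ≤ sumSqDev t y :=
  (sumSqDev_le_sum_sq_sub s y _).trans <|
    sum_le_sum_of_subset_of_nonneg hst fun _ _ _ => sq_nonneg _

theorem sumSqDev_union_le [DecidableEq ι] {s t : Finset ι} (hst : Disjoint s t)
    {y : ι → ℝ} {M : ℝ} (hM : 0 ≤ M) (hy : ∀ i ∈ s ∪ t, y i ∈ Set.Icc 0 M) :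
    sumSqDev (s ∪ t) y ≤ sumSqDev t y + #s * M ^ 2 := by
  set μ := (𝔼 j ∈ t, y j)
  have hμ : μ ∈ Set.Icc 0 M := by
    rcases t.eq_empty_or_nonempty with rfl | ht
    · simpa [μ] using hM
    · exact ⟨le_expect ht fun i hi => (hy i (mem_union_right s hi)).1,
        expect_le ht fun i hi => (hy i (mem_union_right s hi)).2⟩
  have hs : ∑ i ∈ s, (y i - μ) ^ 2 ≤ #s * M ^ 2 := by
    rw [← nsmul_eq_mul, ← sum_const]
    refine sum_le_sum fun i hi => ?_
    obtain ⟨hy0, hyM⟩ := hy i (mem_union_left t hi)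
    exact sq_le_sq' (by linarith [hμ.2]) (by linarith [hμ.1])
  calc sumSqDev (s ∪ t) y ≤ ∑ i ∈ s ∪ t, (y i - μ) ^ 2 := sumSqDev_le_sum_sq_sub _ _ _
    _ = ∑ i ∈ s, (y i - μ) ^ 2 + sumSqDev t y := by rw [sum_union hst]; rfl
    _ ≤ sumSqDev t y + #s * M ^ 2 := by linarith

end SumSqDev

section Split

variable {ι : Type*} [Fintype ι]

/-- `m · L j` in the notation of the paper. -/
noncomputable def splitSqDev (x : ι → ℕ) (y : ι → ℝ) (j : ℕ) : ℝ :=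
  sumSqDev {i | x i ≤ j} y + sumSqDev {i | j < x i} y

theorem splitSqDev_le_of_le (x : ι → ℕ) {y : ι → ℝ} {M : ℝ} (hM : 0 ≤ M)
    (hy : ∀ i, y i ∈ Set.Icc 0 M) {j' j : ℕ} (hj : j' ≤ j) :
    splitSqDev x y j' ≤ splitSqDev x y j + #{i | j' < x i ∧ x i ≤ j} * M ^ 2 := by
  classical
  have hleft : ({i | x i ≤ j'} : Finset ι) ⊆ ({i | x i ≤ j} : Finset ι) := by
    intro i; simp only [mem_filter, mem_univ, true_and]; omega
  have hright : ({i | j' < x i} : Finset ι) =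
      ({i | j' < x i ∧ x i ≤ j} : Finset ι) ∪ ({i | j < x i} : Finset ι) := by
    ext i; simp only [mem_union, mem_filter, mem_univ, true_and]; omega
  have hdisj : Disjoint ({i | j' < x i ∧ x i ≤ j} : Finset ι) ({i | j < x i} : Finset ι) :=
    disjoint_filter.mpr fun i _ h h' => by omega
  have := sumSqDev_union_le hdisj hM fun i _ => hy i
  rw [← hright] at this
  unfold splitSqDev
  linarith [sumSqDev_mono hleft y]

end Split

theorem Nat.exists_lt_and_lt_and_le_succ {α : Type*} [LinearOrder α] {f : ℕ → α} {a : α}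
    {k : ℕ} (h0 : f 0 < a) (hk : a ≤ f k) : ∃ t < k, f t < a ∧ a ≤ f (t + 1) := by
  induction k with
  | zero => exact absurd hk (not_le.mpr h0)
  | succ k ih =>
    by_cases hak : a ≤ f k
    · obtain ⟨t, htk, ht⟩ := ih hak
      exact ⟨t, htk.trans (lt_add_one k), ht⟩
    · exact ⟨k, lt_add_one k, not_le.mp hak, hk⟩

theorem candidate_splits_additive_approx_general
    (m N : ℕ)
    (x : Fin m → ℕ)
    (M : ℝ) (hM : 0 ≤ M)
    (y : Fin m → ℝ) (hy : ∀ i, 0 ≤ y i ∧ y i ≤ M)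
    (μ γ L : ℕ → ℝ)
    (hμ : ∀ k : ℕ, ({i : Fin m | x i ≤ k} : Finset (Fin m)).Nonempty →
      μ k = (∑ i ∈ ({i : Fin m | x i ≤ k} : Finset (Fin m)), y i) /
            (({i : Fin m | x i ≤ k} : Finset (Fin m)).card : ℝ))
    (hγ : ∀ k : ℕ, ({i : Fin m | k < x i} : Finset (Fin m)).Nonempty →
      γ k = (∑ i ∈ ({i : Fin m | k < x i} : Finset (Fin m)), y i) /
            (({i : Fin m | k < x i} : Finset (Fin m)).card : ℝ))
    (hL : ∀ k : ℕ, L k = (1 / (m : ℝ)) *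
      ((∑ i ∈ ({i : Fin m | x i ≤ k} : Finset (Fin m)), (y i - μ k) ^ 2) +
       (∑ i ∈ ({i : Fin m | k < x i} : Finset (Fin m)), (y i - γ k) ^ 2)))
    (b : ℝ) (hb : 0 ≤ b)
    (k : ℕ) (js : ℕ → ℕ)
    (hjs0 : js 0 = 0) (hjsk : js k = N)
    (hgap : ∀ t : ℕ, t < k →
      ((({i : Fin m | js t < x i ∧ x i ≤ js (t + 1)} : Finset (Fin m)).card : ℝ) ≤ b)) :
    ∃ t : ℕ, t ≤ k ∧ ∀ j : ℕ, 1 ≤ j → j ≤ N →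
      L (js t) ≤ L j + 5 * b * M ^ 2 / (4 * (m : ℝ)) := by
  have hLeq (j : ℕ) : L j = splitSqDev x y j / m := by
    rw [hL, sum_sq_sub_eq_sumSqDev (hμ j), sum_sq_sub_eq_sumSqDev (hγ j), splitSqDev]
    ring
  obtain ⟨t, ht, htmin⟩ :=
    exists_min_image (range (k + 1)) (fun t => L (js t)) nonempty_range_add_one
  refine ⟨t, Nat.lt_succ_iff.mp (mem_range.mp ht), fun j hj hjN => ?_⟩
  obtain ⟨t', ht'k, hlt, hle⟩ :=
    Nat.exists_lt_and_lt_and_le_succ (f := js) (by omega : js 0 < j) (hjsk ▸ hjN)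
  have hcard : (#{i | js t' < x i ∧ x i ≤ j} : ℝ) ≤ b :=
    le_trans (by gcongr with i) (hgap t' ht'k)
  have hshift : L (js t') ≤ L j + b * M ^ 2 / m := by
    rw [hLeq, hLeq, ← add_div]
    gcongr
    calc splitSqDev x y (js t') ≤ splitSqDev x y j + #{i | js t' < x i ∧ x i ≤ j} * M ^ 2 :=
          splitSqDev_le_of_le x hM hy hlt.le
      _ ≤ _ := by gcongr
  calc L (js t) ≤ L (js t') := htmin t' (mem_range.mpr (by omega))
    _ ≤ L j + b * M ^ 2 / m := hshift
    _ ≤ L j + 5 * b * M ^ 2 / (4 * m) := by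
        rw [show 5 * b * M ^ 2 / (4 * m) = 5 / 4 * (b * M ^ 2 / m) by ring]
        gcongr
        exact le_mul_of_one_le_left (by positivity) (by norm_num)

/-- If candidate split points `0 = j₀ < j₁ < … < j_k = N` are such that at most `b`
observations lie strictly between consecutive candidates, then the best candidate
split has mean squared error within an additive `5bM²/(4m)` of the optimum over
all splits `j ∈ {1,…,N}`. -/
theorem candidate_splits_additive_approx
    (m N : ℕ) (hm : 1 ≤ m) (hN : 1 ≤ N)
    (x : Fin m → ℕ) (hx : ∀ i, 1 ≤ x i ∧ x i ≤ N)
    (M : ℝ) (hM : 0 ≤ M)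
    (y : Fin m → ℝ) (hy : ∀ i, 0 ≤ y i ∧ y i ≤ M)
    (μ γ L : ℕ → ℝ)
    (hμ : ∀ k : ℕ, ({i : Fin m | x i ≤ k} : Finset (Fin m)).Nonempty →
      μ k = (∑ i ∈ ({i : Fin m | x i ≤ k} : Finset (Fin m)), y i) /
            (({i : Fin m | x i ≤ k} : Finset (Fin m)).card : ℝ))
    (hγ : ∀ k : ℕ, ({i : Fin m | k < x i} : Finset (Fin m)).Nonempty →
      γ k = (∑ i ∈ ({i : Fin m | k < x i} : Finset (Fin m)), y i) /
            (({i : Fin m | k < x i} : Finset (Fin m)).card : ℝ))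
    (hL : ∀ k : ℕ, L k = (1 / (m : ℝ)) *
      ((∑ i ∈ ({i : Fin m | x i ≤ k} : Finset (Fin m)), (y i - μ k) ^ 2) +
       (∑ i ∈ ({i : Fin m | k < x i} : Finset (Fin m)), (y i - γ k) ^ 2)))
    (b : ℝ) (hb : 0 ≤ b)
    (k : ℕ) (js : ℕ → ℕ)
    (hjs0 : js 0 = 0) (hjsk : js k = N)
    (hmono : ∀ t : ℕ, t < k → js t < js (t + 1))
    (hgap : ∀ t : ℕ, t < k →
      ((({i : Fin m | js t < x i ∧ x i ≤ js (t + 1)} : Finset (Fin m)).card : ℝ) ≤ b)) :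
    ∃ t : ℕ, t ≤ k ∧ ∀ j : ℕ, 1 ≤ j → j ≤ N →
      L (js t) ≤ L j + 5 * b * M ^ 2 / (4 * (m : ℝ)) :=
  candidate_splits_additive_approx_general m N x M hM y hy μ γ L hμ hγ hL b hb k js hjs0 hjsk hgap
end

section
/- Fix integers m, N ≥ 1, observations x_1,…,x_m ∈ {1,…,N}, real labels y_1,…,y_m, and real thresholds z_left, z_right. Suppose some j ∈ {0,1,…,N} satisfies Error_left(j) > z_left and Error_right(j) > z_right. Then no j' ∈ {0,1,…,N} satisfies both Error_left(j') ≤ z_left and Error_right(j') ≤ z_right. -/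
/-!
The mean of a block minimises its squared error about any centre, and adding points to a block
adds nonnegative terms; so the left error is monotone and the right error antitone in the split.
A split `j'` feasible for the guess would have to beat `j` on the right (forcing `j' > j`) and on
the left (forcing `j' < j`).
-/

open Finset

namespace Finset

variable {ι : Type*} (s : Finset ι) (f : ι → ℝ)

theorem sum_sq_sub_eq_sum_sq_sub_average_add (c : ℝ) :
    ∑ i ∈ s, (f i - c) ^ 2 =
      ∑ i ∈ s, (f i - (∑ i ∈ s, f i) / #s) ^ 2 + #s * ((∑ i ∈ s, f i) / #s - c) ^ 2 := by
  set a := (∑ i ∈ s, f i) / #s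
  have hdev : ∑ i ∈ s, (f i - a) = 0 := by
    rcases s.eq_empty_or_nonempty with rfl | hs
    · simp
    · rw [sum_sub_distrib, sum_const, nsmul_eq_mul, mul_div_cancel₀ _ (by positivity), sub_self]
  calc ∑ i ∈ s, (f i - c) ^ 2
      = ∑ i ∈ s, ((f i - a) ^ 2 + 2 * (a - c) * (f i - a) + (a - c) ^ 2) :=
        sum_congr rfl fun i _ => by ring
    _ = ∑ i ∈ s, (f i - a) ^ 2 + #s * (a - c) ^ 2 := by
        rw [sum_add_distrib, sum_add_distrib, ← mul_sum, hdev, sum_const, nsmul_eq_mul]; ring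

theorem sum_sq_sub_average_le (c : ℝ) :
    ∑ i ∈ s, (f i - (∑ i ∈ s, f i) / #s) ^ 2 ≤ ∑ i ∈ s, (f i - c) ^ 2 := by
  rw [sum_sq_sub_eq_sum_sq_sub_average_add s f c]
  exact le_add_of_nonneg_right (by positivity)

variable {s f}

theorem sum_sq_sub_le_of_subset {t : Finset ι} (hst : s ⊆ t) {c : ℝ}
    (hc : s.Nonempty → c = (∑ i ∈ s, f i) / #s) (d : ℝ) :
    ∑ i ∈ s, (f i - c) ^ 2 ≤ ∑ i ∈ t, (f i - d) ^ 2 := by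
  rcases s.eq_empty_or_nonempty with rfl | hs
  · simpa using sum_nonneg fun i _ => sq_nonneg (f i - d)
  calc ∑ i ∈ s, (f i - c) ^ 2 ≤ ∑ i ∈ s, (f i - d) ^ 2 := hc hs ▸ sum_sq_sub_average_le s f d
    _ ≤ ∑ i ∈ t, (f i - d) ^ 2 := sum_le_sum_of_subset_of_nonneg hst fun i _ _ => sq_nonneg _

end Finset

theorem regression_infeasible_guess_general
    (m N : ℕ)
    (x : Fin m → ℕ)
    (y : Fin m → ℝ)
    (zleft zright : ℝ)
    (μ γ : ℕ → ℝ)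
    (hμ : ∀ k : ℕ, ({i : Fin m | x i ≤ k} : Finset (Fin m)).Nonempty →
      μ k = (∑ i ∈ ({i : Fin m | x i ≤ k} : Finset (Fin m)), y i) /
            (({i : Fin m | x i ≤ k} : Finset (Fin m)).card : ℝ))
    (hγ : ∀ k : ℕ, ({i : Fin m | k < x i} : Finset (Fin m)).Nonempty →
      γ k = (∑ i ∈ ({i : Fin m | k < x i} : Finset (Fin m)), y i) /
            (({i : Fin m | k < x i} : Finset (Fin m)).card : ℝ))
    (ErrorLeft ErrorRight : ℕ → ℝ)
    (hErrorLeft : ∀ k : ℕ, ErrorLeft k =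
      ∑ i ∈ ({i : Fin m | x i ≤ k} : Finset (Fin m)), (y i - μ k) ^ 2)
    (hErrorRight : ∀ k : ℕ, ErrorRight k =
      ∑ i ∈ ({i : Fin m | k < x i} : Finset (Fin m)), (y i - γ k) ^ 2)
    (j : ℕ)
    (hEl : zleft < ErrorLeft j) (hEr : zright < ErrorRight j) :
    ∀ j' : ℕ, j' ≤ N → ¬(ErrorLeft j' ≤ zleft ∧ ErrorRight j' ≤ zright) := by
  have left_mono : Monotone ErrorLeft := fun k k' hk => by
    rw [hErrorLeft, hErrorLeft]
    refine sum_sq_sub_le_of_subset (fun i hi => ?_) (hμ k) _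
    simp only [mem_filter, mem_univ, true_and] at hi ⊢
    omega
  have right_anti : Antitone ErrorRight := fun k k' hk => by
    rw [hErrorRight, hErrorRight]
    refine sum_sq_sub_le_of_subset (fun i hi => ?_) (hγ k') _
    simp only [mem_filter, mem_univ, true_and] at hi ⊢
    omega
  rintro j' - ⟨hl, hr⟩
  rcases le_total j' j with h | h
  · linarith [right_anti h]
  · linarith [left_mono h]

/-- If some split `j` has left squared error exceeding `z_left` and right squared
error exceeding `z_right`, then no split is feasible for the guess
`(z_left, z_right)`: the guess can be discarded. -/
theorem regression_infeasible_guess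
    (m N : ℕ) (hm : 1 ≤ m) (hN : 1 ≤ N)
    (x : Fin m → ℕ) (hx : ∀ i, 1 ≤ x i ∧ x i ≤ N)
    (y : Fin m → ℝ)
    (zleft zright : ℝ)
    (μ γ : ℕ → ℝ)
    (hμ : ∀ k : ℕ, ({i : Fin m | x i ≤ k} : Finset (Fin m)).Nonempty →
      μ k = (∑ i ∈ ({i : Fin m | x i ≤ k} : Finset (Fin m)), y i) /
            (({i : Fin m | x i ≤ k} : Finset (Fin m)).card : ℝ))
    (hγ : ∀ k : ℕ, ({i : Fin m | k < x i} : Finset (Fin m)).Nonempty →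
      γ k = (∑ i ∈ ({i : Fin m | k < x i} : Finset (Fin m)), y i) /
            (({i : Fin m | k < x i} : Finset (Fin m)).card : ℝ))
    (ErrorLeft ErrorRight : ℕ → ℝ)
    (hErrorLeft : ∀ k : ℕ, ErrorLeft k =
      ∑ i ∈ ({i : Fin m | x i ≤ k} : Finset (Fin m)), (y i - μ k) ^ 2)
    (hErrorRight : ∀ k : ℕ, ErrorRight k =
      ∑ i ∈ ({i : Fin m | k < x i} : Finset (Fin m)), (y i - γ k) ^ 2)
    (j : ℕ) (hjN : j ≤ N)
    (hEl : zleft < ErrorLeft j) (hEr : zright < ErrorRight j) :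
    ∀ j' : ℕ, j' ≤ N → ¬(ErrorLeft j' ≤ zleft ∧ ErrorRight j' ≤ zright) :=
  regression_infeasible_guess_general m N x y zleft zright μ γ hμ hγ ErrorLeft ErrorRight hErrorLeft
    hErrorRight j hEl hEr
end

section
/- There exists a constant C₀ > 0 such that the following holds for every C ≥ C₀. Fix integers m ≥ 1 and N ≥ 2, reals α ∈ (0,1), observations x_1,…,x_m ∈ {1,…,N}, and set p = C·log N / m^α; assume 0 < p ≤ 1. Let B_1,…,B_m be independent Bernoulli(p) random variables, and for 1 ≤ a ≤ b ≤ N let k_{[a,b]} = ∑_{i : a ≤ x_i ≤ b} B_i and f_{[a,b]} = #{i : a ≤ x_i ≤ b}. Then with probability at least 1 − 1/N, simultaneously for all 1 ≤ a ≤ b ≤ N: (i) if f_{[a,b]} ≥ 4·m^α then k_{[a,b]}/p ≥ 2·m^α, and (ii) if f_{[a,b]} ≤ m^α/8 then k_{[a,b]}/p ≤ m^α. -/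
/-!
Each `B i` has moment generating function `1 + p (eᵗ - 1) ≤ exp (p (eᵗ - 1))`, so by
independence a range with true count `f` has `k` with mgf at most `exp (f p (eᵗ - 1))`.
Chernoff's bound with `t = ± log 2` then makes each of the two failures for a fixed range have
probability at most `exp (-(p mᵅ / 2)) = N ^ (-C / 2)`, and a union bound over the `N²` ranges
gives failure probability at most `2 N² N ^ (-C / 2) ≤ 1 / N` once `C ≥ 8`.
-/

open Finset MeasureTheory ProbabilityTheory Real

section Bernoulli

variable {Ω : Type*} {X : Ω → ℝ}

lemma eq_indicator_of_zero_or_one (h01 : ∀ ω, X ω = 0 ∨ X ω = 1) :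
    X = {ω | X ω = 1}.indicator 1 := by
  funext ω; rcases h01 ω with h | h <;> simp [h]

lemma exp_mul_of_zero_or_one (h01 : ∀ ω, X ω = 0 ∨ X ω = 1) (t : ℝ) :
    (fun ω ↦ exp (t * X ω)) = fun ω ↦ 1 + (exp t - 1) * X ω := by
  funext ω; rcases h01 ω with h | h <;> simp [h]

variable [MeasurableSpace Ω] {μ : Measure Ω} [IsProbabilityMeasure μ]

lemma integrable_of_zero_or_one (hX : Measurable X) (h01 : ∀ ω, X ω = 0 ∨ X ω = 1) :
    Integrable X μ := by
  rw [eq_indicator_of_zero_or_one h01]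
  exact (integrable_const 1).indicator (hX (measurableSet_singleton 1))

lemma integrable_exp_mul_of_zero_or_one (hX : Measurable X) (h01 : ∀ ω, X ω = 0 ∨ X ω = 1)
    (t : ℝ) : Integrable (fun ω ↦ exp (t * X ω)) μ := by
  rw [exp_mul_of_zero_or_one h01]
  exact (integrable_const 1).add ((integrable_of_zero_or_one hX h01).const_mul _)

lemma mgf_of_zero_or_one (hX : Measurable X) (h01 : ∀ ω, X ω = 0 ∨ X ω = 1) (t : ℝ) :
    mgf X μ t = 1 + μ.real {ω | X ω = 1} * (exp t - 1) := by
  have hmean : ∫ ω, X ω ∂μ = μ.real {ω | X ω = 1} := by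
    conv_lhs => rw [eq_indicator_of_zero_or_one h01]
    exact integral_indicator_one (hX (measurableSet_singleton 1))
  rw [mgf, exp_mul_of_zero_or_one h01,
    integral_add (integrable_const 1) ((integrable_of_zero_or_one hX h01).const_mul _),
    integral_const_mul, hmean]
  simp [mul_comm]

end Bernoulli

section Chernoff

variable {Ω ι : Type*} [MeasurableSpace Ω] {μ : Measure Ω} [IsProbabilityMeasure μ]
  {B : ι → Ω → ℝ} {p : ℝ} (hB : ∀ i, Measurable (B i))
  (h01 : ∀ i ω, B i ω = 0 ∨ B i ω = 1)
  (hp : ∀ i, μ.real {ω | B i ω = 1} = p) (hind : iIndepFun B μ)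
include hB h01 hp hind

lemma mgf_sum_le_of_zero_or_one (S : Finset ι) (t : ℝ) :
    mgf (∑ i ∈ S, B i) μ t ≤ exp (#S * p * (exp t - 1)) := by
  rw [hind.mgf_sum hB, mul_assoc, exp_nat_mul, ← prod_const]
  refine prod_le_prod (fun _ _ ↦ mgf_nonneg) fun i _ ↦ ?_
  rw [mgf_of_zero_or_one (hB i) (h01 i), hp]
  linarith [add_one_le_exp (p * (exp t - 1))]

lemma measureReal_sum_ge_le_exp (S : Finset ι) {t : ℝ} (ht : 0 ≤ t) (ε : ℝ) :
    μ.real {ω | ε ≤ ∑ i ∈ S, B i ω} ≤ exp (-t * ε + #S * p * (exp t - 1)) := by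
  have h := measure_ge_le_exp_mul_mgf ε ht
    (hind.integrable_exp_mul_sum hB (s := S) fun i _ ↦
      integrable_exp_mul_of_zero_or_one (hB i) (h01 i) t)
  simp only [Finset.sum_apply] at h
  rw [exp_add]
  exact h.trans (by gcongr; exact mgf_sum_le_of_zero_or_one hB h01 hp hind S t)

lemma measureReal_sum_le_le_exp (S : Finset ι) {t : ℝ} (ht : t ≤ 0) (ε : ℝ) :
    μ.real {ω | ∑ i ∈ S, B i ω ≤ ε} ≤ exp (-t * ε + #S * p * (exp t - 1)) := by
  have h := measure_le_le_exp_mul_mgf ε ht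
    (hind.integrable_exp_mul_sum hB (s := S) fun i _ ↦
      integrable_exp_mul_of_zero_or_one (hB i) (h01 i) t)
  simp only [Finset.sum_apply] at h
  rw [exp_add]
  exact h.trans (by gcongr; exact mgf_sum_le_of_zero_or_one hB h01 hp hind S t)

lemma measureReal_sum_le_two_mul_le (hp0 : 0 ≤ p) (S : Finset ι) {M : ℝ} (hM : 0 ≤ M) :
    μ.real {ω | 4 * M ≤ #S ∧ ∑ i ∈ S, B i ω ≤ 2 * M * p} ≤ exp (-(M * p / 2)) := by
  by_cases hS : 4 * M ≤ #S
  · simp only [hS, true_and]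
    refine (measureReal_sum_le_le_exp hB h01 hp hind S
      (neg_nonpos.mpr (log_nonneg one_le_two)) _).trans (exp_le_exp.mpr ?_)
    rw [exp_neg, exp_log two_pos]
    nlinarith [log_two_lt_d9, mul_le_mul_of_nonneg_right hS hp0, mul_nonneg hM hp0]
  · simp [hS, exp_nonneg]

lemma measureReal_mul_le_sum_le (hp0 : 0 ≤ p) (S : Finset ι) {M : ℝ} (hM : 0 ≤ M) :
    μ.real {ω | #S ≤ M / 8 ∧ M * p ≤ ∑ i ∈ S, B i ω} ≤ exp (-(M * p / 2)) := by
  by_cases hS : #S ≤ M / 8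
  · simp only [hS, true_and]
    refine (measureReal_sum_ge_le_exp hB h01 hp hind S
      (log_nonneg one_le_two) _).trans (exp_le_exp.mpr ?_)
    rw [exp_log two_pos]
    nlinarith [log_two_gt_d9, mul_le_mul_of_nonneg_right hS hp0, mul_nonneg hM hp0]
  · simp [hS, exp_nonneg]

lemma measureReal_sampling_fails_le (hp0 : 0 < p) (S : Finset ι) {M : ℝ} (hM : 0 ≤ M) :
    μ.real {ω | ¬((4 * M ≤ #S → 2 * M ≤ (∑ i ∈ S, B i ω) / p) ∧
      (#S ≤ M / 8 → (∑ i ∈ S, B i ω) / p ≤ M))} ≤ 2 * exp (-(M * p / 2)) := by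
  have hsub : {ω | ¬((4 * M ≤ #S → 2 * M ≤ (∑ i ∈ S, B i ω) / p) ∧
      (#S ≤ M / 8 → (∑ i ∈ S, B i ω) / p ≤ M))} ⊆
      {ω | 4 * M ≤ #S ∧ ∑ i ∈ S, B i ω ≤ 2 * M * p} ∪
        {ω | #S ≤ M / 8 ∧ M * p ≤ ∑ i ∈ S, B i ω} := by
    intro ω hω
    by_cases hlow : 4 * M ≤ #S → 2 * M ≤ (∑ i ∈ S, B i ω) / p
    · obtain ⟨hS, hsum⟩ := Classical.not_imp.mp fun hup ↦ hω ⟨hlow, hup⟩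
      exact Or.inr ⟨hS, ((lt_div_iff₀ hp0).mp (not_le.mp hsum)).le⟩
    · obtain ⟨hS, hsum⟩ := Classical.not_imp.mp hlow
      exact Or.inl ⟨hS, ((div_lt_iff₀ hp0).mp (not_le.mp hsum)).le⟩
  calc _ ≤ _ := measureReal_mono hsub
    _ ≤ _ := measureReal_union_le _ _
    _ ≤ _ := (add_le_add (measureReal_sum_le_two_mul_le hB h01 hp hind hp0.le S hM)
        (measureReal_mul_le_sum_le hB h01 hp hind hp0.le S hM)).trans_eq (two_mul _).symm

end Chernoff

lemma one_sub_le_measureReal_of_measureReal_compl_le {Ω : Type*} [MeasurableSpace Ω]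
    {μ : Measure Ω} [IsProbabilityMeasure μ] {s : Set Ω} {ε : ℝ} (h : μ.real sᶜ ≤ ε) :
    1 - ε ≤ μ.real s := by
  have hsplit := measureReal_union_le (μ := μ) s sᶜ
  rw [Set.union_compl_self, probReal_univ] at hsplit
  linarith

lemma sq_mul_two_mul_exp_le {N L : ℝ} (hN : 2 ≤ N) (hL : 8 * log N ≤ L) :
    N ^ 2 * (2 * exp (-(L / 2))) ≤ 1 / N := by
  have hN0 : 0 < N := by linarith
  have hexp : exp (-(L / 2)) ≤ (N ^ 4)⁻¹ := by
    rw [← exp_log (pow_pos hN0 4), ← exp_neg, exp_le_exp, log_pow]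
    push_cast
    linarith
  calc N ^ 2 * (2 * exp (-(L / 2))) ≤ N ^ 2 * (2 * (N ^ 4)⁻¹) := by gcongr
    _ = 2 / N / N := by field_simp
    _ ≤ 1 / N := by gcongr; rw [div_le_one hN0]; exact hN

/-- Sampling theorem (Theorem 3 of the paper): sampling each observation
independently with probability `p = C log N / m^α`, with probability at least
`1 − 1/N`, for every range `[a,b] ⊆ [N]`: if the true count is at least `4m^α`
then the scaled sample count is at least `2m^α`, and if the true count is at most
`m^α/8` then the scaled sample count is at most `m^α`. -/
theorem sampling_theorem :
    ∃ C₀ : ℝ, 0 < C₀ ∧ ∀ C : ℝ, C₀ ≤ C →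
    ∀ (m N : ℕ), 1 ≤ m → 2 ≤ N →
    ∀ α : ℝ, 0 < α → α < 1 →
    ∀ x : Fin m → ℕ, (∀ i, 1 ≤ x i ∧ x i ≤ N) →
    ∀ p : ℝ, p = C * Real.log N / (m : ℝ) ^ α → 0 < p → p ≤ 1 →
    ∀ (Ω : Type) (_ : MeasurableSpace Ω) (Pr : Measure Ω), IsProbabilityMeasure Pr →
    ∀ B : Fin m → Ω → ℝ,
      (∀ i, Measurable (B i)) →
      (∀ i ω, B i ω = 0 ∨ B i ω = 1) →
      (∀ i, Pr {ω | B i ω = 1} = ENNReal.ofReal p) →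
      iIndepFun B Pr →
    1 - 1 / (N : ℝ) ≤
      (Pr {ω | ∀ a b : ℕ, 1 ≤ a → a ≤ b → b ≤ N →
        ((4 * (m : ℝ) ^ α ≤
            ((({i : Fin m | a ≤ x i ∧ x i ≤ b} : Finset (Fin m)).card : ℝ)) →
          2 * (m : ℝ) ^ α ≤
            (∑ i ∈ ({i : Fin m | a ≤ x i ∧ x i ≤ b} : Finset (Fin m)), B i ω) / p) ∧
         ((({i : Fin m | a ≤ x i ∧ x i ≤ b} : Finset (Fin m)).card : ℝ) ≤
            (m : ℝ) ^ α / 8 →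
          (∑ i ∈ ({i : Fin m | a ≤ x i ∧ x i ≤ b} : Finset (Fin m)), B i ω) / p ≤
            (m : ℝ) ^ α))}).toReal := by
  refine ⟨8, by norm_num, ?_⟩
  intro C hC m N hm hN α _ _ x _ p hpdef hp0 _ Ω _ Pr _ B hB h01 hBp hind
  set M := (m : ℝ) ^ α
  have hM : 0 < M := rpow_pos_of_pos (by exact_mod_cast hm) α
  have hL : 8 * log N ≤ M * p := by
    rw [hpdef, mul_div_cancel₀ _ hM.ne']
    exact mul_le_mul_of_nonneg_right hC (log_nonneg (by exact_mod_cast (by omega : 1 ≤ N)))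
  have hp : ∀ i, Pr.real {ω | B i ω = 1} = p := fun i ↦ by
    rw [measureReal_def, hBp i, ENNReal.toReal_ofReal hp0.le]
  set S : ℕ × ℕ → Finset (Fin m) := fun r ↦ {i | r.1 ≤ x i ∧ x i ≤ r.2}
  set accurate : ℕ × ℕ → Ω → Prop := fun r ω ↦
    (4 * M ≤ #(S r) → 2 * M ≤ (∑ i ∈ S r, B i ω) / p) ∧
    (#(S r) ≤ M / 8 → (∑ i ∈ S r, B i ω) / p ≤ M)
  set good := {ω | ∀ a b : ℕ, 1 ≤ a → a ≤ b → b ≤ N → accurate (a, b) ω}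
  have hcover : goodᶜ ⊆ ⋃ r ∈ Icc 1 N ×ˢ Icc 1 N, {ω | ¬accurate r ω} := by
    intro ω hω
    simp only [good, Set.mem_compl_iff, Set.mem_ofPred_eq, not_forall] at hω
    obtain ⟨a, b, ha, hab, hb, hbad⟩ := hω
    exact Set.mem_biUnion (mem_product.mpr ⟨mem_Icc.mpr ⟨ha, hab.trans hb⟩,
      mem_Icc.mpr ⟨ha.trans hab, hb⟩⟩) hbad
  refine one_sub_le_measureReal_of_measureReal_compl_le (s := good) ?_
  calc Pr.real goodᶜ ≤ ∑ r ∈ Icc 1 N ×ˢ Icc 1 N, Pr.real {ω | ¬accurate r ω} :=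
      (measureReal_mono hcover (measure_ne_top _ _)).trans (measureReal_biUnion_finset_le _ _)
    _ ≤ ∑ _r ∈ Icc 1 N ×ˢ Icc 1 N, 2 * exp (-(M * p / 2)) := sum_le_sum fun r _ ↦
      measureReal_sampling_fails_le hB h01 hp hind hp0 _ hM.le
    _ ≤ 1 / N := by simpa [sq] using sq_mul_two_mul_exp_le (by exact_mod_cast hN) hL
end
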